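/- arXiv:1508.00168 — 6 statements merged into one kernel-verified Lean document; each statement's English description precedes it below -/
import Mathlib

section
/- For P > 0 and τ > 0, the two-phase multi-access strategy gives smaller sum delay than equal rate splitting: 4τ/γ(P) − τγ(2P)/γ(P)² < 4τ/γ(2P), where γ(x) = (1/2)log₂(1+x). -/
noncomputable def γ (x : ℝ) : ℝ := Real.logb 2 (1 + x) / 2

theorem two_phase_beats_equal_split (P τ : ℝ) (hP : 0 < P) (hτ : 0 < τ) :
    4 * τ / γ P - τ * γ (2 * P) / (γ P) ^ 2 < 4 * τ / γ (2 * P) := by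
  have ha : 0 < γ P := by
    have := Real.logb_pos (by norm_num : (1:ℝ) < 2) (by linarith : (1:ℝ) < 1 + P)
    unfold γ; linarith
  have hb : 0 < γ (2 * P) := by
    have := Real.logb_pos (by norm_num : (1:ℝ) < 2) (by linarith : (1:ℝ) < 1 + 2 * P)
    unfold γ; linarith
  have hlt : γ (2 * P) < 2 * γ P := by
    have h1 : Real.logb 2 (1 + 2 * P) < Real.logb 2 ((1 + P) ^ 2) :=
      Real.logb_lt_logb (by norm_num) (by linarith) (by nlinarith)
    rw [Real.logb_pow] at h1
    unfold γ; push_cast at h1; linarith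
  set a := γ P
  set b := γ (2 * P)
  have hdiff : (4 * τ / a - τ * b / a ^ 2) - 4 * τ / b = -(τ * (2 * a - b) ^ 2) / (a ^ 2 * b) := by
    field_simp
    ring
  have hpos : 0 < τ * (2 * a - b) ^ 2 := by
    have : 0 < 2 * a - b := by linarith
    positivity
  rw [neg_div] at hdiff
  linarith [div_pos hpos (by positivity : (0:ℝ) < a ^ 2 * b)]
end

section
/- The map G₁ sends line segments to line segments: if (r₁,r₂) and (r₁′,r₂′) with r₁, r₁′ > 0 satisfy a₁r₁ + a₂r₂ = 1 and a₁r₁′ + a₂r₂′ = 1 for constants a₁, a₂, then the images d = G₁(r₁,r₂) and d′ = G₁(r₁′,r₂′) satisfy a₁′d₁ + a₂′d₂ = 1 and a₁′d₁′ + a₂′d₂′ = 1, where a₂′ = a₂r₂*/(a₁τ₁ + a₂τ₂) and a₁′ = (1 − a₂r₂*)/(a₁τ₁ + a₂τ₂), provided a₁τ₁ + a₂τ₂ ≠ 0. -/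
noncomputable def G₁ (τ₁ τ₂ r₂star : ℝ) (r : ℝ × ℝ) : ℝ × ℝ :=
  (τ₁ / r.1, τ₂ / r₂star + (r₂star - r.2) * τ₁ / (r₂star * r.1))

/- With d = G₁ (r₁, r₂): (1 - a₂ r₂*) d₁ + a₂ r₂* d₂ = (1 - a₂ r₂) τ₁ / r₁ + a₂ τ₂ = a₁ τ₁ + a₂ τ₂,
the last step being the line equation. -/
theorem G₁_mem_image_line {τ₁ τ₂ r₂star a₁ a₂ r₁ r₂ : ℝ} (hr₂star : r₂star ≠ 0) (hr₁ : r₁ ≠ 0)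
    (hline : a₁ * r₁ + a₂ * r₂ = 1) (hden : a₁ * τ₁ + a₂ * τ₂ ≠ 0) :
    ((1 - a₂ * r₂star) / (a₁ * τ₁ + a₂ * τ₂)) * (G₁ τ₁ τ₂ r₂star (r₁, r₂)).1
      + (a₂ * r₂star / (a₁ * τ₁ + a₂ * τ₂)) * (G₁ τ₁ τ₂ r₂star (r₁, r₂)).2 = 1 := by
  simp only [G₁]
  field_simp
  linear_combination (-τ₁) * hline

theorem G₁_affine_on_lines_general (τ₁ τ₂ r₂star : ℝ)
    (hr₂star : 0 < r₂star)
    (a₁ a₂ r₁ r₂ r₁' r₂' : ℝ) (h₁ : 0 < r₁) (h₁' : 0 < r₁')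
    (hline : a₁ * r₁ + a₂ * r₂ = 1) (hline' : a₁ * r₁' + a₂ * r₂' = 1)
    (hden : a₁ * τ₁ + a₂ * τ₂ ≠ 0) :
    ((1 - a₂ * r₂star) / (a₁ * τ₁ + a₂ * τ₂)) * (G₁ τ₁ τ₂ r₂star (r₁, r₂)).1
      + (a₂ * r₂star / (a₁ * τ₁ + a₂ * τ₂)) * (G₁ τ₁ τ₂ r₂star (r₁, r₂)).2 = 1 ∧
    ((1 - a₂ * r₂star) / (a₁ * τ₁ + a₂ * τ₂)) * (G₁ τ₁ τ₂ r₂star (r₁', r₂')).1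
      + (a₂ * r₂star / (a₁ * τ₁ + a₂ * τ₂)) * (G₁ τ₁ τ₂ r₂star (r₁', r₂')).2 = 1 :=
  ⟨G₁_mem_image_line hr₂star.ne' h₁.ne' hline hden,
    G₁_mem_image_line hr₂star.ne' h₁'.ne' hline' hden⟩

theorem G₁_affine_on_lines (τ₁ τ₂ r₂star : ℝ)
    (hτ₁ : 0 < τ₁) (hτ₂ : 0 < τ₂) (hr₂star : 0 < r₂star)
    (a₁ a₂ r₁ r₂ r₁' r₂' : ℝ) (h₁ : 0 < r₁) (h₁' : 0 < r₁')
    (hline : a₁ * r₁ + a₂ * r₂ = 1) (hline' : a₁ * r₁' + a₂ * r₂' = 1)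
    (hden : a₁ * τ₁ + a₂ * τ₂ ≠ 0) :
    ((1 - a₂ * r₂star) / (a₁ * τ₁ + a₂ * τ₂)) * (G₁ τ₁ τ₂ r₂star (r₁, r₂)).1
      + (a₂ * r₂star / (a₁ * τ₁ + a₂ * τ₂)) * (G₁ τ₁ τ₂ r₂star (r₁, r₂)).2 = 1 ∧
    ((1 - a₂ * r₂star) / (a₁ * τ₁ + a₂ * τ₂)) * (G₁ τ₁ τ₂ r₂star (r₁', r₂')).1
      + (a₂ * r₂star / (a₁ * τ₁ + a₂ * τ₂)) * (G₁ τ₁ τ₂ r₂star (r₁', r₂')).2 = 1 :=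
  G₁_affine_on_lines_general τ₁ τ₂ r₂star hr₂star a₁ a₂ r₁ r₂ r₁' r₂' h₁ h₁' hline hline' hden
end

section
/- If C ⊆ ℝ²₊ is convex and G₁ is the map (r₁,r₂) ↦ (τ₁/r₁, τ₂/r₂* + (r₂* − r₂)τ₁/(r₂*·r₁)) restricted to points with r₁ > 0, then the image G₁(C ∩ {r₁ > 0}) is convex. -/
theorem G₁_image_convex (τ₁ τ₂ r₂star : ℝ)
    (hτ₁ : 0 < τ₁) (hτ₂ : 0 < τ₂) (hr₂star : 0 < r₂star)
    (C : Set (ℝ × ℝ)) (hC : Convex ℝ C)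
    (hCpos : C ⊆ {r : ℝ × ℝ | 0 ≤ r.1 ∧ 0 ≤ r.2}) :
    Convex ℝ (G₁ τ₁ τ₂ r₂star '' (C ∩ {r : ℝ × ℝ | 0 < r.1})) := by
  rintro _ ⟨a, ⟨haC, ha1⟩, rfl⟩ _ ⟨b, ⟨hbC, hb1⟩, rfl⟩ t u ht hu htu
  simp only [Set.mem_setOf_eq] at ha1 hb1
  have hu' : u = 1 - t := by linarith
  subst hu'
  set D : ℝ := t * b.1 + (1 - t) * a.1 with hD
  have hD0 : 0 < D := by
    rcases eq_or_lt_of_le ht with h | h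
    · simp [hD, ← h, ha1]
    · nlinarith [mul_nonneg hu ha1.le, mul_pos h hb1]
  set s : ℝ := t * b.1 / D with hs
  have hs0 : 0 ≤ s := by positivity
  have hs1 : s ≤ 1 := by
    rw [hs, div_le_one hD0]
    nlinarith [mul_nonneg hu ha1.le]
  set c : ℝ × ℝ := s • a + (1 - s) • b with hc
  have hcC : c ∈ C := hC haC hbC hs0 (by linarith) (by ring)
  have hc1 : c.1 = a.1 * b.1 / D := by
    simp only [hc, Prod.fst_add, Prod.smul_fst, smul_eq_mul, hs]
    field_simp
    ring
  have hc1pos : 0 < c.1 := by rw [hc1]; positivity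
  refine ⟨c, ⟨hcC, hc1pos⟩, ?_⟩
  have hc2 : c.2 = s * a.2 + (1 - s) * b.2 := by
    simp [hc]
  have ha1' : a.1 ≠ 0 := ha1.ne'
  have hb1' : b.1 ≠ 0 := hb1.ne'
  have hc1' : c.1 ≠ 0 := hc1pos.ne'
  simp only [G₁, Prod.ext_iff, Prod.fst_add, Prod.snd_add, Prod.smul_fst, Prod.smul_snd,
    smul_eq_mul]
  constructor
  · rw [hc1]
    field_simp
    ring
  · rw [hc1, hc2, hs]
    have hr' : r₂star ≠ 0 := hr₂star.ne'
    have hD' : D ≠ 0 := hD0.ne'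
    field_simp
    ring
end

section
/- For the weighted sum completion time over the Case I GMAC region D* = {(d₁,d₂) ∈ ℝ²₊ : d₁ ≥ τ₁/γ(P₁), d₂ ≥ τ₂/γ(P₂), γ(P₁)d₁ + [γ(P₁+P₂)−γ(P₁)]d₂ ≥ τ₁+τ₂}, if 0 ≤ w ≤ γ(P₁)/γ(P₁+P₂), then the minimum of w·d₁ + (1−w)·d₂ over D* is attained at d_D = (φ₁, τ₂/γ(P₂)), where φ₁ = [τ₁ + τ₂ − (γ(P₁+P₂)−γ(P₁))·τ₂/γ(P₂)]/γ(P₁). -/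
theorem gmac_caseI_min_at_dD (P₁ P₂ τ₁ τ₂ w : ℝ)
    (hP₁ : 0 < P₁) (hP₂ : 0 < P₂) (hτ₁ : 0 < τ₁) (hτ₂ : 0 < τ₂)
    (hcase : τ₂ / τ₁ ≤ (γ (P₁ + P₂) - γ P₁) / γ P₁)
    (hw0 : 0 ≤ w) (hw1 : w ≤ γ P₁ / γ (P₁ + P₂)) :
    let D : Set (ℝ × ℝ) := {d | 0 ≤ d.1 ∧ 0 ≤ d.2 ∧
        τ₁ / γ P₁ ≤ d.1 ∧ τ₂ / γ P₂ ≤ d.2 ∧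
        τ₁ + τ₂ ≤ γ P₁ * d.1 + (γ (P₁ + P₂) - γ P₁) * d.2}
    let dD : ℝ × ℝ := ((τ₁ + τ₂ - (γ (P₁ + P₂) - γ P₁) * (τ₂ / γ P₂)) / γ P₁,
        τ₂ / γ P₂)
    dD ∈ D ∧ ∀ d ∈ D, w * dD.1 + (1 - w) * dD.2 ≤ w * d.1 + (1 - w) * d.2 := by
  intro D dD
  set a := γ P₁ with ha_def
  set b := γ P₂ with hb_def
  set g := γ (P₁ + P₂) with hg_def
  have ha : 0 < a := by
    have := Real.logb_pos (by norm_num : (1:ℝ) < 2) (by linarith : (1:ℝ) < 1 + P₁)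
    simp only [ha_def, γ]; linarith
  have hb : 0 < b := by
    have := Real.logb_pos (by norm_num : (1:ℝ) < 2) (by linarith : (1:ℝ) < 1 + P₂)
    simp only [hb_def, γ]; linarith
  have hag : a < g := by
    have := Real.logb_lt_logb (by norm_num : (1:ℝ) < 2)
      (by linarith : (0:ℝ) < 1 + P₁) (by linarith : 1 + P₁ < 1 + (P₁ + P₂))
    simp only [ha_def, hg_def, γ]; linarith
  have hgab : g - a ≤ b := by
    have h1 : Real.logb 2 (1 + (P₁ + P₂)) ≤ Real.logb 2 ((1 + P₁) * (1 + P₂)) :=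
      (Real.logb_le_logb (by norm_num : (1:ℝ) < 2) (by positivity) (by positivity)).mpr (by nlinarith)
    rw [Real.logb_mul (by positivity) (by positivity)] at h1
    simp only [ha_def, hb_def, hg_def, γ]; linarith
  have hwg : w * g ≤ a := by
    have := (le_div_iff₀ (by linarith : (0:ℝ) < g)).mp hw1
    linarith
  -- membership
  have ht2b : 0 ≤ τ₂ / b := by positivity
  have hd1 : τ₁ / a ≤ dD.1 := by
    rw [div_le_div_iff₀ ha ha]
    have h1 : (g - a) * (τ₂ / b) ≤ b * (τ₂ / b) :=
      mul_le_mul_of_nonneg_right hgab ht2b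
    rw [mul_div_cancel₀ _ hb.ne'] at h1
    nlinarith
  have hd1' : 0 ≤ dD.1 := le_trans (by positivity) hd1
  have hline : τ₁ + τ₂ ≤ a * dD.1 + (g - a) * dD.2 := by
    show τ₁ + τ₂ ≤ a * ((τ₁ + τ₂ - (g - a) * (τ₂ / b)) / a) + (g - a) * (τ₂ / b)
    rw [mul_div_cancel₀ _ ha.ne']
    linarith
  constructor
  · exact ⟨hd1', ht2b, hd1, le_refl _, hline⟩
  · rintro d ⟨hd0, hd0', hdc1, hdc2, hdc3⟩
    have key : w * (a * d.1 + (g - a) * d.2 - (τ₁ + τ₂)) ≥ 0 :=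
      mul_nonneg hw0 (by linarith)
    have key2 : (a - w * g) * (d.2 - τ₂ / b) ≥ 0 :=
      mul_nonneg (by linarith) (by linarith)
    have hdD1 : a * dD.1 = τ₁ + τ₂ - (g - a) * (τ₂ / b) :=
      mul_div_cancel₀ _ ha.ne'
    have expand : a * ((w * d.1 + (1 - w) * d.2) - (w * dD.1 + (1 - w) * dD.2))
        = w * (a * d.1 + (g - a) * d.2 - (τ₁ + τ₂)) + (a - w * g) * (d.2 - τ₂ / b) := by
      have : dD.2 = τ₂ / b := rfl
      nlinarith [hdD1]
    nlinarith [expand, key, key2, ha]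
end

section
/- For the weighted sum completion time over the Case I GMAC region D*, if γ(P₁)/γ(P₁+P₂) ≤ w ≤ 1, then the minimum of w·d₁ + (1−w)·d₂ over D* is attained at d_E = (τ₁/γ(P₁), τ₂/(γ(P₁+P₂)−γ(P₁))). -/
lemma γ_pos {x : ℝ} (hx : 0 < x) : 0 < γ x :=
  half_pos (Real.logb_pos one_lt_two (by linarith))

lemma γ_lt_γ {x y : ℝ} (hx : -1 < x) (hxy : x < y) : γ x < γ y :=
  div_lt_div_of_pos_right (Real.logb_lt_logb one_lt_two (by linarith) (by linarith)) two_pos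

lemma γ_add_le {x y : ℝ} (hx : 0 ≤ x) (hy : 0 ≤ y) : γ (x + y) ≤ γ x + γ y := by
  have hlog : Real.logb 2 (1 + (x + y)) ≤ Real.logb 2 ((1 + x) * (1 + y)) :=
    Real.logb_le_logb_of_le one_lt_two (by linarith) (by nlinarith)
  rw [Real.logb_mul (by linarith) (by linarith)] at hlog
  unfold γ
  linarith

lemma weighted_sum_le_of_sum_rate_le {a b w τ₁ τ₂ d₁ d₂ : ℝ} (ha : 0 < a) (hb : 0 < b)
    (hw₀ : a ≤ w * (a + b)) (hw₁ : w ≤ 1) (hd₁ : τ₁ / a ≤ d₁)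
    (hd : τ₁ + τ₂ ≤ a * d₁ + b * d₂) :
    w * (τ₁ / a) + (1 - w) * (τ₂ / b) ≤ w * d₁ + (1 - w) * d₂ := by
  have hsplit : b * (w * d₁ + (1 - w) * d₂ - (w * (τ₁ / a) + (1 - w) * (τ₂ / b))) =
      (1 - w) * (a * d₁ + b * d₂ - (τ₁ + τ₂)) + (w * (a + b) - a) * (d₁ - τ₁ / a) := by
    field_simp
    ring
  have hnonneg : 0 ≤ (1 - w) * (a * d₁ + b * d₂ - (τ₁ + τ₂)) +
      (w * (a + b) - a) * (d₁ - τ₁ / a) := by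
    apply add_nonneg <;> apply mul_nonneg <;> linarith
  rw [← hsplit] at hnonneg
  linarith [nonneg_of_mul_nonneg_right hnonneg hb]

theorem gmac_caseI_min_at_dE_general (P₁ P₂ τ₁ τ₂ w : ℝ)
    (hP₁ : 0 < P₁) (hP₂ : 0 < P₂) (hτ₁ : 0 < τ₁) (hτ₂ : 0 < τ₂)
    (hw0 : γ P₁ / γ (P₁ + P₂) ≤ w) (hw1 : w ≤ 1) :
    let D : Set (ℝ × ℝ) := {d | 0 ≤ d.1 ∧ 0 ≤ d.2 ∧
        τ₁ / γ P₁ ≤ d.1 ∧ τ₂ / γ P₂ ≤ d.2 ∧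
        τ₁ + τ₂ ≤ γ P₁ * d.1 + (γ (P₁ + P₂) - γ P₁) * d.2}
    let dE : ℝ × ℝ := (τ₁ / γ P₁, τ₂ / (γ (P₁ + P₂) - γ P₁))
    dE ∈ D ∧ ∀ d ∈ D, w * dE.1 + (1 - w) * dE.2 ≤ w * d.1 + (1 - w) * d.2 := by
  intro D dE
  have ha : 0 < γ P₁ := γ_pos hP₁
  have hb : 0 < γ (P₁ + P₂) - γ P₁ := sub_pos.2 (γ_lt_γ (by linarith) (by linarith))
  have hbc : γ (P₁ + P₂) - γ P₁ ≤ γ P₂ := by linarith [γ_add_le hP₁.le hP₂.le]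
  have hw : γ P₁ ≤ w * (γ P₁ + (γ (P₁ + P₂) - γ P₁)) := by
    rw [add_sub_cancel]
    exact (div_le_iff₀ (by linarith)).1 hw0
  refine ⟨⟨by positivity, by positivity, le_rfl, div_le_div_of_nonneg_left hτ₂.le hb hbc, ?_⟩, ?_⟩
  · rw [mul_div_cancel₀ _ ha.ne', mul_div_cancel₀ _ hb.ne']
  · rintro d ⟨-, -, hd₁, -, hd⟩
    exact weighted_sum_le_of_sum_rate_le ha hb hw hw1 hd₁ hd

theorem gmac_caseI_min_at_dE (P₁ P₂ τ₁ τ₂ w : ℝ)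
    (hP₁ : 0 < P₁) (hP₂ : 0 < P₂) (hτ₁ : 0 < τ₁) (hτ₂ : 0 < τ₂)
    (hcase : τ₂ / τ₁ ≤ (γ (P₁ + P₂) - γ P₁) / γ P₁)
    (hw0 : γ P₁ / γ (P₁ + P₂) ≤ w) (hw1 : w ≤ 1) :
    let D : Set (ℝ × ℝ) := {d | 0 ≤ d.1 ∧ 0 ≤ d.2 ∧
        τ₁ / γ P₁ ≤ d.1 ∧ τ₂ / γ P₂ ≤ d.2 ∧
        τ₁ + τ₂ ≤ γ P₁ * d.1 + (γ (P₁ + P₂) - γ P₁) * d.2}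
    let dE : ℝ × ℝ := (τ₁ / γ P₁, τ₂ / (γ (P₁ + P₂) - γ P₁))
    dE ∈ D ∧ ∀ d ∈ D, w * dE.1 + (1 - w) * dE.2 ≤ w * d.1 + (1 - w) * d.2 :=
  gmac_caseI_min_at_dE_general P₁ P₂ τ₁ τ₂ w hP₁ hP₂ hτ₁ hτ₂ hw0 hw1
end

section
/- With r̃₁(P₁) = γ(h₁P₁), r̃₂(P₁) = γ(h₂P) − γ(h₂P₁), g(P₁) = (1/h₁+P₁)/(1/h₂+P₁), and a₁(P₁) = g/(r̃₂ + g·r̃₁), the function 1/a₁(P₁) = r̃₂(P₁)/g(P₁) + r̃₁(P₁) is strictly decreasing on [0, P] when h₁ > h₂ > 0 and P > 0; specifically its derivative equals −(h₁−h₂)h₁h₂/(h₂+h₁h₂P₁)² · [γ(h₂P) − γ(h₂P₁)], which is negative for P₁ < P. -/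
open Real Set

theorem γ_strictMonoOn : StrictMonoOn γ (Ioi (-1)) := by
  intro x hx y _ hxy
  have hx' : 0 < 1 + x := by linarith [mem_Ioi.mp hx]
  unfold γ
  gcongr
  norm_num

theorem hasDerivAt_γ_comp_mul {h : ℝ} (x : ℝ) (hh : h ≠ 0) (hx : 1 / h + x ≠ 0) :
    HasDerivAt (fun y => γ (h * y)) (1 / (2 * log 2 * (1 / h + x))) x := by
  have hlin : HasDerivAt (fun y => 1 + h * y) h x := by
    simpa using ((hasDerivAt_id x).const_mul h).const_add 1
  have hne : 1 + h * x ≠ 0 := by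
    rw [show 1 + h * x = h * (1 / h + x) by field_simp]
    exact mul_ne_zero hh hx
  refine (((hlin.log hne).div_const (log 2)).div_const 2).congr_deriv ?_
  field_simp

theorem hasDerivAt_add_div_add (a b x : ℝ) (hx : a + x ≠ 0) :
    HasDerivAt (fun y => (b + y) / (a + y)) ((a - b) / (a + x) ^ 2) x := by
  refine (((hasDerivAt_id x).const_add b).div ((hasDerivAt_id x).const_add a) hx).congr_deriv ?_
  simp only [id]
  ring

theorem hasDerivAt_inv_a₁ {h₁ h₂ x : ℝ} (C : ℝ) (hh₁ : 0 < h₁) (hh₂ : 0 < h₂) (hx : 0 ≤ x) :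
    HasDerivAt (fun y => (C - γ (h₂ * y)) * ((1 / h₂ + y) / (1 / h₁ + y)) + γ (h₁ * y))
      (-((h₁ - h₂) * h₁ * h₂ / (h₂ + h₁ * h₂ * x) ^ 2) * (C - γ (h₂ * x))) x := by
  have hx₁ : 0 < 1 / h₁ + x := by positivity
  have hx₂ : 0 < 1 / h₂ + x := by positivity
  refine ((((hasDerivAt_const x C).sub (hasDerivAt_γ_comp_mul x hh₂.ne' hx₂.ne')).mul
    (hasDerivAt_add_div_add _ (1 / h₂) x hx₁.ne')).add
      (hasDerivAt_γ_comp_mul x hh₁.ne' hx₁.ne')).congr_deriv ?_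
  simp only [Pi.sub_apply]
  field_simp
  ring

theorem gbc_inv_a₁_strictAnti_general (h₁ h₂ P : ℝ)
    (hh : h₂ < h₁) (hh₂ : 0 < h₂) :
    let g : ℝ → ℝ := fun P₁ => (1 / h₁ + P₁) / (1 / h₂ + P₁)
    let f : ℝ → ℝ := fun P₁ => (γ (h₂ * P) - γ (h₂ * P₁)) / g P₁ + γ (h₁ * P₁)
    StrictAntiOn f (Set.Icc 0 P) ∧
    ∀ P₁ ∈ Set.Icc (0 : ℝ) P,
      deriv f P₁ = -((h₁ - h₂) * h₁ * h₂ / (h₂ + h₁ * h₂ * P₁) ^ 2)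
          * (γ (h₂ * P) - γ (h₂ * P₁)) ∧
      (P₁ < P → deriv f P₁ < 0) := by
  intro g f
  set f' := fun P₁ => -((h₁ - h₂) * h₁ * h₂ / (h₂ + h₁ * h₂ * P₁) ^ 2)
    * (γ (h₂ * P) - γ (h₂ * P₁))
  have hh₁ : 0 < h₁ := hh₂.trans hh
  have hf : ∀ x ∈ Icc 0 P, HasDerivAt f (f' x) x := by
    intro x hx
    convert hasDerivAt_inv_a₁ (γ (h₂ * P)) hh₁ hh₂ hx.1 using 2 with y
    simp only [f, g, div_div_eq_mul_div, mul_div_assoc]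
  have hf'_neg : ∀ x ∈ Ico 0 P, f' x < 0 := by
    intro x ⟨hx₀, hxP⟩
    have hcoef : 0 < (h₁ - h₂) * h₁ * h₂ / (h₂ + h₁ * h₂ * x) ^ 2 := by
      have : 0 < h₁ - h₂ := sub_pos.mpr hh
      positivity
    have hγ : γ (h₂ * x) < γ (h₂ * P) :=
      γ_strictMonoOn (by simp only [mem_Ioi]; nlinarith) (by simp only [mem_Ioi]; nlinarith)
        (by gcongr)
    exact mul_neg_of_neg_of_pos (neg_neg_of_pos hcoef) (sub_pos.mpr hγ)
  refine ⟨strictAntiOn_of_deriv_neg (convex_Icc 0 P) ?_ ?_, fun x hx =>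
    ⟨(hf x hx).deriv, fun hxP => (hf x hx).deriv ▸ hf'_neg x ⟨hx.1, hxP⟩⟩⟩
  · exact fun x hx => (hf x hx).continuousAt.continuousWithinAt
  · intro x hx
    rw [interior_Icc] at hx
    rw [(hf x (Ioo_subset_Icc_self hx)).deriv]
    exact hf'_neg x (Ioo_subset_Ico_self hx)

theorem gbc_inv_a₁_strictAnti (h₁ h₂ P : ℝ)
    (hh : h₂ < h₁) (hh₂ : 0 < h₂) (hP : 0 < P) :
    let g : ℝ → ℝ := fun P₁ => (1 / h₁ + P₁) / (1 / h₂ + P₁)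
    let f : ℝ → ℝ := fun P₁ => (γ (h₂ * P) - γ (h₂ * P₁)) / g P₁ + γ (h₁ * P₁)
    StrictAntiOn f (Set.Icc 0 P) ∧
    ∀ P₁ ∈ Set.Icc (0 : ℝ) P,
      deriv f P₁ = -((h₁ - h₂) * h₁ * h₂ / (h₂ + h₁ * h₂ * P₁) ^ 2)
          * (γ (h₂ * P) - γ (h₂ * P₁)) ∧
      (P₁ < P → deriv f P₁ < 0) :=
  gbc_inv_a₁_strictAnti_general h₁ h₂ P hh hh₂
end
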